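/- Let φ: X → G be an injective (a,b)-rough isometry from a bounded-degree graph X to a Cayley graph (G,S) of a group of polynomial volume growth. Then there exist constants C₁ < 1, C₂ > 0 and R₁ such that for all y ∈ G, p ∈ X with d^S(φ(p), y) ≤ b and all R ≥ R₁: |B_p^X(R)| ≥ C₂·|B_y^G(C₁·R)|. In fact one may take C₁ = 1/(2a) and R₁ = 6ab. -/

import Mathlib

def IsRoughIsometryWith {X Y : Type*} (dX : X → X → ℝ) (dY : Y → Y → ℝ)
    (a b : ℝ) (φ : X → Y) : Prop :=
  (∀ x y : X, a⁻¹ * dX x y - b ≤ dY (φ x) (φ y) ∧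
      dY (φ x) (φ y) ≤ a * dX x y + b) ∧
  ∀ z : Y, ∃ x : X, dY z (φ x) ≤ b

noncomputable def wordDist {G : Type*} [Group G] (S : Set G) (x y : G) : ℕ :=
  sInf {n | ∃ l : List G, l.length = n ∧ (∀ g ∈ l, g ∈ S) ∧ x * l.prod = y}

noncomputable def growth {G : Type*} [Group G] (S : Set G) (n : ℕ) : ℕ :=
  {x : G | wordDist S 1 x ≤ n}.ncard

/-!
For each `z : G` pick `ψ z : V` with `d(z, φ (ψ z)) ≤ b` (the image of `φ` is `b`-dense). If
`d(y, z) ≤ R / (2a)`, the triangle inequality in `G` and the lower rough-isometry bound give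
`d(p, ψ z) ≤ a (R / (2a) + 3b) ≤ R`, so `ψ` maps the ball of `G` into the ball of `X`. Every fibre
of `ψ` lies in a word ball of radius `⌈b⌉` around a point `φ x`, which has `growth S ⌈b⌉`
elements; hence `C₂ = 1 / growth S ⌈b⌉` works.
-/

open Set

lemma Set.ncard_le_mul_ncard_of_mapsTo {α β : Type*} {f : α → β} {s : Set α} {t : Set β}
    (ht : t.Finite) (hf : MapsTo f s t) (n : ℕ) (hn : ∀ b ∈ t, {a ∈ s | f a = b}.ncard ≤ n) :
    s.ncard ≤ n * t.ncard := by
  classical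
  by_cases hs : s.Finite
  · rw [ncard_eq_toFinset_card s hs, ncard_eq_toFinset_card t ht]
    refine Finset.card_le_mul_card_image_of_maps_to
      (fun a ha => by simpa using hf (by simpa using ha)) n fun b hb => ?_
    rw [← ncard_coe_finset, Finset.coe_filter]
    simpa only [Finite.mem_toFinset] using hn b (by simpa using hb)
  · simp [Infinite.ncard hs]

namespace IsRoughIsometryWith

variable {α β : Type*} {dX : α → α → ℝ} {dY : β → β → ℝ} {a b : ℝ} {φ : α → β}

lemma dist_le (hφ : IsRoughIsometryWith dX dY a b φ) (ha : 0 < a) (x y : α) :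
    dX x y ≤ a * (dY (φ x) (φ y) + b) := by
  rw [← inv_mul_le_iff₀ ha]
  linarith [(hφ.1 x y).1]

lemma finite_setOf_dist_le (hφ : IsRoughIsometryWith dX dY a b φ) (ha : 0 ≤ a)
    (hinj : Function.Injective φ) (hfin : ∀ y r, {z | dY y z ≤ r}.Finite) (p : α) (R : ℝ) :
    {x | dX p x ≤ R}.Finite := by
  refine Finite.of_finite_image ((hfin (φ p) (a * R + b)).subset ?_) hinj.injOn
  rintro _ ⟨x, hx, rfl⟩
  exact (hφ.1 p x).2.trans (by gcongr; exact hx)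

end IsRoughIsometryWith

section WordMetric

variable {G : Type*} [Group G] {S : Set G}

lemma wordDist_le_length {x y : G} {l : List G} (hl : ∀ g ∈ l, g ∈ S) (hxy : x * l.prod = y) :
    wordDist S x y ≤ l.length :=
  Nat.sInf_le ⟨l, rfl, hl, hxy⟩

lemma wordDist_self (x : G) : wordDist S x x = 0 :=
  Nat.le_zero.mp (wordDist_le_length (l := []) (by simp) (by simp))

lemma wordDist_mul_left (g x y : G) : wordDist S (g * x) (g * y) = wordDist S x y := by
  simp only [wordDist, mul_assoc, mul_right_inj]

lemma exists_list_prod_eq (hSsym : ∀ s ∈ S, s⁻¹ ∈ S) (hSgen : Subgroup.closure S = ⊤) (g : G) :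
    ∃ l : List G, (∀ s ∈ l, s ∈ S) ∧ l.prod = g := by
  have hg : g ∈ Submonoid.closure (S ∪ S⁻¹) := by
    rw [← Subgroup.closure_toSubmonoid, hSgen]
    trivial
  rw [union_eq_left.mpr fun s hs => by simpa using hSsym _ hs] at hg
  exact Submonoid.exists_list_of_mem_closure hg

lemma exists_list_length_eq_wordDist (hSsym : ∀ s ∈ S, s⁻¹ ∈ S)
    (hSgen : Subgroup.closure S = ⊤) (x y : G) :
    ∃ l : List G, l.length = wordDist S x y ∧ (∀ g ∈ l, g ∈ S) ∧ x * l.prod = y := by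
  obtain ⟨l, hl, hprod⟩ := exists_list_prod_eq hSsym hSgen (x⁻¹ * y)
  exact Nat.sInf_mem (s := {n | ∃ l : List G, l.length = n ∧ (∀ g ∈ l, g ∈ S) ∧ x * l.prod = y})
    ⟨l.length, l, rfl, hl, by rw [hprod, mul_inv_cancel_left]⟩

lemma wordDist_triangle (hSsym : ∀ s ∈ S, s⁻¹ ∈ S) (hSgen : Subgroup.closure S = ⊤)
    (x y z : G) : wordDist S x z ≤ wordDist S x y + wordDist S y z := by
  obtain ⟨l₁, hlen₁, hS₁, hprod₁⟩ := exists_list_length_eq_wordDist hSsym hSgen x y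
  obtain ⟨l₂, hlen₂, hS₂, hprod₂⟩ := exists_list_length_eq_wordDist hSsym hSgen y z
  calc wordDist S x z ≤ (l₁ ++ l₂).length :=
        wordDist_le_length (by simpa [or_imp, forall_and] using ⟨hS₁, hS₂⟩)
          (by rw [List.prod_append, ← mul_assoc, hprod₁, hprod₂])
    _ = wordDist S x y + wordDist S y z := by rw [List.length_append, hlen₁, hlen₂]

lemma setOf_wordDist_le_eq_image (x : G) (n : ℕ) :
    {z | wordDist S x z ≤ n} = (x * ·) '' {g | wordDist S 1 g ≤ n} := by
  ext z
  refine ⟨fun hz => ⟨x⁻¹ * z, ?_, mul_inv_cancel_left x z⟩, ?_⟩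
  · rwa [mem_ofPred, ← wordDist_mul_left x, mul_one, mul_inv_cancel_left]
  · rintro ⟨g, hg, rfl⟩
    simpa only [mem_ofPred, mul_one] using (wordDist_mul_left (S := S) x 1 g).trans_le hg

lemma setOf_wordDist_le_left_eq_image (w : G) (n : ℕ) :
    {z | wordDist S z w ≤ n} = (fun g => w * g⁻¹) '' {g | wordDist S 1 g ≤ n} := by
  ext z
  refine ⟨fun hz => ⟨z⁻¹ * w, ?_, by group⟩, ?_⟩
  · rwa [mem_ofPred, ← wordDist_mul_left z, mul_one, mul_inv_cancel_left]
  · rintro ⟨g, hg, rfl⟩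
    have h := wordDist_mul_left (S := S) (g * w⁻¹) (w * g⁻¹) w
    simp only [mul_assoc, inv_mul_cancel_left, mul_inv_cancel, inv_mul_cancel, mul_one] at h
    exact h.symm.trans_le hg

lemma ncard_setOf_wordDist_le_left (w : G) (n : ℕ) :
    {z | wordDist S z w ≤ n}.ncard = growth S n := by
  rw [setOf_wordDist_le_left_eq_image, ncard_image_of_injective]
  · rfl
  · exact fun g h hgh => inv_injective (mul_left_cancel hgh)

lemma finite_setOf_wordDist_one_le (hSfin : S.Finite) (hSsym : ∀ s ∈ S, s⁻¹ ∈ S)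
    (hSgen : Subgroup.closure S = ⊤) (n : ℕ) : {g : G | wordDist S 1 g ≤ n}.Finite := by
  have : Finite S := hSfin.to_subtype
  refine ((List.finite_length_le S n).image fun l => (l.map (↑)).prod).subset fun g hg => ?_
  obtain ⟨l, hlen, hS, hprod⟩ := exists_list_length_eq_wordDist hSsym hSgen 1 g
  lift l to List S using hS
  exact ⟨l, by simpa [← hlen] using (hg : wordDist S 1 g ≤ n), by simpa using hprod⟩

lemma finite_setOf_wordDist_le (hSfin : S.Finite) (hSsym : ∀ s ∈ S, s⁻¹ ∈ S)
    (hSgen : Subgroup.closure S = ⊤) (x : G) (n : ℕ) : {z | wordDist S x z ≤ n}.Finite := by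
  rw [setOf_wordDist_le_eq_image]
  exact (finite_setOf_wordDist_one_le hSfin hSsym hSgen n).image _

lemma finite_setOf_wordDist_le_left (hSfin : S.Finite) (hSsym : ∀ s ∈ S, s⁻¹ ∈ S)
    (hSgen : Subgroup.closure S = ⊤) (w : G) (n : ℕ) : {z | wordDist S z w ≤ n}.Finite := by
  rw [setOf_wordDist_le_left_eq_image]
  exact (finite_setOf_wordDist_one_le hSfin hSsym hSgen n).image _

lemma finite_setOf_cast_wordDist_le (hSfin : S.Finite) (hSsym : ∀ s ∈ S, s⁻¹ ∈ S)
    (hSgen : Subgroup.closure S = ⊤) (x : G) (r : ℝ) :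
    {z | (wordDist S x z : ℝ) ≤ r}.Finite :=
  (finite_setOf_wordDist_le hSfin hSsym hSgen x ⌈r⌉₊).subset fun _ hz =>
    Nat.cast_le.mp ((hz : (_ : ℝ) ≤ r).trans (Nat.le_ceil r))

lemma growth_pos (hSfin : S.Finite) (hSsym : ∀ s ∈ S, s⁻¹ ∈ S)
    (hSgen : Subgroup.closure S = ⊤) (n : ℕ) : 0 < growth S n :=
  (ncard_pos (finite_setOf_wordDist_one_le hSfin hSsym hSgen n)).mpr
    ⟨1, by simp [wordDist_self]⟩

end WordMetric

theorem ncard_setOf_wordDist_le_le_growth_mul {α G : Type*} [Group G] {S : Set G}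
    (hSfin : S.Finite) (hSsym : ∀ s ∈ S, s⁻¹ ∈ S) (hSgen : Subgroup.closure S = ⊤)
    {dX : α → α → ℝ} {a b : ℝ} (ha : 0 < a) {φ : α → G} (hinj : Function.Injective φ)
    (hφ : IsRoughIsometryWith dX (fun x y => (wordDist S x y : ℝ)) a b φ)
    {y : G} {p : α} (hpy : (wordDist S (φ p) y : ℝ) ≤ b) {r R : ℝ} (hR : a * (r + 3 * b) ≤ R) :
    {z | (wordDist S y z : ℝ) ≤ r}.ncard ≤ growth S ⌈b⌉₊ * {x | dX p x ≤ R}.ncard := by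
  choose ψ hψ using show ∀ z, ∃ x, (wordDist S z (φ x) : ℝ) ≤ b from hφ.2
  refine ncard_le_mul_ncard_of_mapsTo (f := ψ)
    (hφ.finite_setOf_dist_le ha.le hinj (finite_setOf_cast_wordDist_le hSfin hSsym hSgen) p R)
    (fun z (hz : (wordDist S y z : ℝ) ≤ r) => ?_) _ fun x _ => ?_
  · have htri : (wordDist S (φ p) (φ (ψ z)) : ℝ) ≤ b + r + b := by
      have h₁ : (wordDist S (φ p) (φ (ψ z)) : ℝ) ≤ wordDist S (φ p) y + wordDist S y (φ (ψ z)) :=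
        mod_cast wordDist_triangle hSsym hSgen _ _ _
      have h₂ : (wordDist S y (φ (ψ z)) : ℝ) ≤ wordDist S y z + wordDist S z (φ (ψ z)) :=
        mod_cast wordDist_triangle hSsym hSgen _ _ _
      linarith [hψ z]
    calc dX p (ψ z) ≤ a * (wordDist S (φ p) (φ (ψ z)) + b) := hφ.dist_le ha p (ψ z)
      _ ≤ a * (r + 3 * b) := mul_le_mul_of_nonneg_left (by linarith) ha.le
      _ ≤ R := hR
  · calc {z | (wordDist S y z : ℝ) ≤ r ∧ ψ z = x}.ncard
        ≤ {z | wordDist S z (φ x) ≤ ⌈b⌉₊}.ncard :=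
          ncard_le_ncard (fun z ⟨_, hzx⟩ => Nat.cast_le.mp ((hzx ▸ hψ z).trans (Nat.le_ceil b)))
            (finite_setOf_wordDist_le_left hSfin hSsym hSgen _ _)
      _ = growth S ⌈b⌉₊ := ncard_setOf_wordDist_le_left _ _

theorem volume_comparison_along_rough_isometry_general {V G : Type*} [Group G]
    (X : SimpleGraph V)
    (S : Set G) (hSfin : S.Finite) (hSsym : ∀ s ∈ S, s⁻¹ ∈ S)
    (hSgen : Subgroup.closure S = ⊤)
    (a b : ℝ) (ha : 1 ≤ a) (φ : V → G) (hinj : Function.Injective φ)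
    (hφ : IsRoughIsometryWith (fun x y => (X.dist x y : ℝ))
      (fun x y => (wordDist S x y : ℝ)) a b φ) :
    ∃ C₂ : ℝ, 0 < C₂ ∧ ∀ (y : G) (p : V), (wordDist S (φ p) y : ℝ) ≤ b →
      ∀ R : ℝ, 6 * a * b ≤ R →
      C₂ * ({z : G | (wordDist S y z : ℝ) ≤ (1 / (2 * a)) * R}.ncard : ℝ) ≤
        ({x : V | (X.dist p x : ℝ) ≤ R}.ncard : ℝ) := by
  have hK : (0 : ℝ) < growth S ⌈b⌉₊ := mod_cast growth_pos hSfin hSsym hSgen _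
  have ha₀ : 0 < a := by linarith
  refine ⟨(growth S ⌈b⌉₊ : ℝ)⁻¹, inv_pos.mpr hK, fun y p hpy R hR => ?_⟩
  have hradius : a * (1 / (2 * a) * R + 3 * b) ≤ R := by
    field_simp
    linarith
  rw [inv_mul_le_iff₀ hK]
  exact_mod_cast ncard_setOf_wordDist_le_le_growth_mul hSfin hSsym hSgen ha₀ hinj hφ hpy hradius

theorem volume_comparison_along_rough_isometry {V G : Type*} [Group G]
    (X : SimpleGraph V) (hconn : X.Connected) (Δ : ℕ) (hΔ : 2 ≤ Δ)
    (hdeg : ∀ v : V, (X.neighborSet v).ncard ≤ Δ)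
    (S : Set G) (hSfin : S.Finite) (hSsym : ∀ s ∈ S, s⁻¹ ∈ S)
    (hSgen : Subgroup.closure S = ⊤)
    (D : ℕ) (c₁ c₂ : ℝ) (hc₁ : 0 < c₁) (hc₂ : 0 < c₂)
    (hpoly : ∀ n : ℕ, 1 ≤ n →
      c₁ * (n : ℝ) ^ D ≤ (growth S n : ℝ) ∧ (growth S n : ℝ) ≤ c₂ * (n : ℝ) ^ D)
    (a b : ℝ) (ha : 1 ≤ a) (hb : 0 ≤ b) (φ : V → G) (hinj : Function.Injective φ)
    (hφ : IsRoughIsometryWith (fun x y => (X.dist x y : ℝ))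
      (fun x y => (wordDist S x y : ℝ)) a b φ) :
    ∃ C₂ : ℝ, 0 < C₂ ∧ ∀ (y : G) (p : V), (wordDist S (φ p) y : ℝ) ≤ b →
      ∀ R : ℝ, 6 * a * b ≤ R →
      C₂ * ({z : G | (wordDist S y z : ℝ) ≤ (1 / (2 * a)) * R}.ncard : ℝ) ≤
        ({x : V | (X.dist p x : ℝ) ≤ R}.ncard : ℝ) :=
  volume_comparison_along_rough_isometry_general X S hSfin hSsym hSgen a b ha φ hinj hφ
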